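/- arXiv:2509.09814 — 3 statements merged into one kernel-verified Lean document; each statement's English description precedes it below -/
import Mathlib

section
/- For every real number x ≥ 1, the Gamma function satisfies x^(x-γ)/e^(x-1) ≤ Γ(x) ≤ x^(x-1/2)/e^(x-1), where γ is the Euler–Mascheroni constant. -/
/-!
Write `ψ = (log Γ)'`. For a constant `a`, the function `log Γ x - (x - a) log x + x - 1` vanishes
at `x = 1` and has derivative `ψ x - log x + a / x`, so both bounds follow from
`log x - γ / x ≤ ψ x ≤ log x - 1 / (2x)` on `[1, ∞)`.

Convexity of `log Γ` squeezes `ψ x` between `log (x - 1)` and `log x`, so `ψ x - log x → 0`,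
while `ψ (x + 1) = ψ x + 1 / x` fixes its increments. Comparing these increments with those of
truncations of the asymptotic series of `log x - ψ x` gives two-sided bounds for `ψ`; at `x = 4`
they determine `γ` to five decimals. That settles the lower bound for `x ≥ 1.1`. Near `x = 1`
the lower bound is tight (`ψ 1 = -γ`), and there `ψ (1 + s) + γ` is bounded below by a partial
sum of `∑ₖ s / ((k + 1) (k + 1 + s))`, expanded to second order in `s`.
-/

open Real Filter Topology Set

local notation "γ" => Real.eulerMascheroniConstant

namespace GammaBounds

section Calculus

variable {f f' : ℝ → ℝ} {a : ℝ}

lemma monotoneOn_Ici_of_hasDerivAt (hf : ∀ x, a ≤ x → HasDerivAt f (f' x) x)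
    (hf' : ∀ x, a < x → 0 ≤ f' x) : MonotoneOn f (Ici a) := by
  refine monotoneOn_of_hasDerivWithinAt_nonneg (f' := f') (convex_Ici a)
    (fun x hx => (hf x hx).continuousAt.continuousWithinAt) (fun x hx => ?_) (fun x hx => ?_)
  all_goals rw [interior_Ici] at hx
  · exact (hf x (le_of_lt hx)).hasDerivWithinAt
  · exact hf' x hx

lemma antitoneOn_Ici_of_hasDerivAt (hf : ∀ x, a ≤ x → HasDerivAt f (f' x) x)
    (hf' : ∀ x, a < x → f' x ≤ 0) : AntitoneOn f (Ici a) := by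
  have := monotoneOn_Ici_of_hasDerivAt (f := -f) (f' := -f') (fun x hx => (hf x hx).neg)
    (fun x hx => neg_nonneg.mpr (hf' x hx))
  exact fun x hx y hy hxy => neg_le_neg_iff.mp (this hx hy hxy)

lemma nonneg_of_hasDerivAt_nonpos_of_tendsto (hf : ∀ x, a ≤ x → HasDerivAt f (f' x) x)
    (hf' : ∀ x, a < x → f' x ≤ 0) (hlim : Tendsto f atTop (𝓝 0)) : 0 ≤ f a := by
  have hanti := antitoneOn_Ici_of_hasDerivAt hf hf'
  refine le_of_tendsto hlim ?_
  filter_upwards [eventually_ge_atTop a] with x hx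
  exact hanti self_mem_Ici hx hx

lemma nonpos_of_le_add_one_of_tendsto {x : ℝ} (hstep : ∀ y, x ≤ y → f y ≤ f (y + 1))
    (hlim : Tendsto f atTop (𝓝 0)) : f x ≤ 0 := by
  have hmono : Monotone fun n : ℕ => f (x + n) := monotone_nat_of_le_succ fun n => by
    simpa [add_assoc] using hstep (x + n) (by simp)
  simpa using hmono.ge_of_tendsto
    (hlim.comp (tendsto_atTop_add_const_left _ x tendsto_natCast_atTop_atTop)) 0

lemma tendsto_inv_const_mul_pow_atTop {c : ℝ} (hc : 0 < c) {n : ℕ} (hn : n ≠ 0) :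
    Tendsto (fun t : ℝ => (c * t ^ n)⁻¹) atTop (𝓝 0) :=
  ((tendsto_pow_atTop hn).const_mul_atTop hc).inv_tendsto_atTop

lemma log_one_add_le_cubic {s : ℝ} (hs : 0 ≤ s) :
    log (1 + s) ≤ s - s ^ 2 / 2 + s ^ 3 / 3 := by
  have hderiv : ∀ u, 0 ≤ u → HasDerivAt (fun s => s - s ^ 2 / 2 + s ^ 3 / 3 - log (1 + s))
      (u ^ 3 / (1 + u)) u := by
    intro u hu
    have hlog := ((hasDerivAt_id' u).const_add 1).log (by positivity)
    refine ((((hasDerivAt_id' u).sub ((hasDerivAt_pow 2 u).div_const 2)).add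
      ((hasDerivAt_pow 3 u).div_const 3)).sub hlog).congr_deriv ?_
    field_simp
    ring
  have := monotoneOn_Ici_of_hasDerivAt hderiv (fun u hu => by positivity) self_mem_Ici
    (mem_Ici.mpr hs) hs
  norm_num at this
  linarith

end Calculus

section StepGap

noncomputable def stepGap (t : ℝ) : ℝ := t⁻¹ - (log (t + 1) - log t)

/-- Truncations of the asymptotic series `log x - ψ x ~ 1/(2x) + 1/(12x²) - 1/(120x⁴) + ⋯`. -/
noncomputable def corr₂ (t : ℝ) : ℝ := (2 * t)⁻¹ + (12 * t ^ 2)⁻¹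

noncomputable def corr₃ (t : ℝ) : ℝ := corr₂ t - (120 * t ^ 4)⁻¹

lemma tendsto_stepGap : Tendsto stepGap atTop (𝓝 0) := by
  have h := tendsto_inv_atTop_zero.sub (tendsto_log_comp_add_sub_log 1)
  rw [sub_zero] at h
  exact h

lemma tendsto_corr₂ : Tendsto corr₂ atTop (𝓝 0) := by
  have h := (tendsto_inv_const_mul_pow_atTop two_pos one_ne_zero).add
    (tendsto_inv_const_mul_pow_atTop (by norm_num : (0 : ℝ) < 12) two_ne_zero)
  simp only [pow_one, add_zero] at h
  exact h

lemma tendsto_corr₃ : Tendsto corr₃ atTop (𝓝 0) := by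
  have h := tendsto_corr₂.sub
    (tendsto_inv_const_mul_pow_atTop (by norm_num : (0 : ℝ) < 120) four_ne_zero)
  rw [sub_zero] at h
  exact h

lemma tendsto_comp_add_one {f : ℝ → ℝ} (hf : Tendsto f atTop (𝓝 0)) :
    Tendsto (fun t => f (t + 1)) atTop (𝓝 0) :=
  hf.comp (tendsto_atTop_add_const_right _ 1 tendsto_id)

variable {t : ℝ}

lemma hasDerivAt_stepGap (ht : 0 < t) :
    HasDerivAt stepGap (-(t ^ 2)⁻¹ - (t + 1)⁻¹ + t⁻¹) t := by
  have hlog := ((hasDerivAt_id' t).add_const 1).log (by positivity)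
  refine ((hasDerivAt_inv ht.ne').sub (hlog.sub (hasDerivAt_log ht.ne'))).congr_deriv ?_
  simp only [one_div]
  ring

lemma hasDerivAt_corr₂ (ht : 0 < t) :
    HasDerivAt corr₂ (-(2 * t ^ 2)⁻¹ - (6 * t ^ 3)⁻¹) t := by
  refine ((((hasDerivAt_id' t).const_mul 2).inv (by positivity)).add
    (((hasDerivAt_pow 2 t).const_mul 12).inv (by positivity))).congr_deriv ?_
  field_simp
  ring

lemma hasDerivAt_corr₃ (ht : 0 < t) :
    HasDerivAt corr₃ (-(2 * t ^ 2)⁻¹ - (6 * t ^ 3)⁻¹ + (30 * t ^ 5)⁻¹) t := by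
  refine ((hasDerivAt_corr₂ ht).sub
    (((hasDerivAt_pow 4 t).const_mul 120).inv (by positivity))).congr_deriv ?_
  field_simp
  ring

lemma stepGap_le_corr₂_sub (ht : 0 < t) : stepGap t ≤ corr₂ t - corr₂ (t + 1) := by
  have hderiv : ∀ x, t ≤ x → HasDerivAt (fun x => corr₂ x - corr₂ (x + 1) - stepGap x)
      (-(6 * x ^ 3 * (x + 1) ^ 3)⁻¹) x := by
    intro x hx
    have hx0 : 0 < x := ht.trans_le hx
    refine (((hasDerivAt_corr₂ hx0).sub
      ((hasDerivAt_corr₂ (by linarith)).comp_add_const x 1)).sub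
      (hasDerivAt_stepGap hx0)).congr_deriv ?_
    field_simp
    ring
  have := nonneg_of_hasDerivAt_nonpos_of_tendsto hderiv
    (fun x hx => by have : 0 < x := ht.trans hx; simp only [Left.neg_nonpos_iff]; positivity)
    (by simpa using
      (tendsto_corr₂.sub (tendsto_comp_add_one tendsto_corr₂)).sub tendsto_stepGap)
  linarith

lemma corr₃_sub_le_stepGap (ht : 0 < t) : corr₃ t - corr₃ (t + 1) ≤ stepGap t := by
  have hderiv : ∀ x, t ≤ x → HasDerivAt (fun x => stepGap x - corr₃ x + corr₃ (x + 1))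
      (-((5 * x ^ 2 + 5 * x + 1) / (30 * x ^ 5 * (x + 1) ^ 5))) x := by
    intro x hx
    have hx0 : 0 < x := ht.trans_le hx
    refine (((hasDerivAt_stepGap hx0).sub (hasDerivAt_corr₃ hx0)).add
      ((hasDerivAt_corr₃ (by linarith)).comp_add_const x 1)).congr_deriv ?_
    field_simp
    ring
  have := nonneg_of_hasDerivAt_nonpos_of_tendsto hderiv
    (fun x hx => by have : 0 < x := ht.trans hx; simp only [Left.neg_nonpos_iff]; positivity)
    (by simpa using
      (tendsto_stepGap.sub tendsto_corr₃).add (tendsto_comp_add_one tendsto_corr₃))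
  linarith

end StepGap

section Digamma

noncomputable def digamma (x : ℝ) : ℝ := deriv (log ∘ Gamma) x

variable {x : ℝ}

lemma hasDerivAt_log_Gamma (hx : 0 < x) : HasDerivAt (log ∘ Gamma) (digamma x) x :=
  ((differentiableAt_Gamma fun m => by linarith [(m.cast_nonneg : (0 : ℝ) ≤ m)]).log
    (Gamma_pos_of_pos hx).ne').hasDerivAt

lemma log_Gamma_add_one (hx : 0 < x) : log (Gamma (x + 1)) = log (Gamma x) + log x := by
  rw [Gamma_add_one hx.ne', log_mul hx.ne' (Gamma_pos_of_pos hx).ne', add_comm]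

lemma digamma_add_one (hx : 0 < x) : digamma (x + 1) = digamma x + x⁻¹ := by
  have hshift := (hasDerivAt_log_Gamma (by linarith : 0 < x + 1)).comp_add_const x 1
  have hsum := (hasDerivAt_log_Gamma hx).add (hasDerivAt_log hx.ne')
  refine hshift.unique (hsum.congr_of_eventuallyEq ?_)
  filter_upwards [eventually_gt_nhds hx] with y hy
  exact log_Gamma_add_one hy

lemma digamma_one : digamma 1 = -γ := by
  have h := (hasDerivAt_Gamma_one.log (by simp)).deriv
  rw [Gamma_one, div_one] at h
  exact h

lemma digamma_add_nat (hx : 0 < x) (n : ℕ) :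
    digamma (x + n) = digamma x + ∑ k ∈ Finset.range n, (x + k)⁻¹ := by
  induction n with
  | zero => simp
  | succ n ih =>
    rw [Nat.cast_succ, ← add_assoc, digamma_add_one (by positivity), ih, Finset.sum_range_succ,
      add_assoc]

lemma digamma_le_log (hx : 0 < x) : digamma x ≤ log x := by
  have h := convexOn_log_Gamma.deriv_le_slope (mem_Ioi.mpr hx) (mem_Ioi.mpr (by linarith))
    (lt_add_one x) (hasDerivAt_log_Gamma hx).differentiableAt
  rwa [slope_def_field, Function.comp_apply, Function.comp_apply, log_Gamma_add_one hx,
    add_sub_cancel_left, add_sub_cancel_left, div_one] at h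

lemma log_le_digamma_add_one (hx : 0 < x) : log x ≤ digamma (x + 1) := by
  have h := convexOn_log_Gamma.slope_le_deriv (mem_Ioi.mpr hx) (mem_Ioi.mpr (by linarith))
    (lt_add_one x) (hasDerivAt_log_Gamma (by linarith)).differentiableAt
  rwa [slope_def_field, Function.comp_apply, Function.comp_apply, log_Gamma_add_one hx,
    add_sub_cancel_left, add_sub_cancel_left, div_one] at h

lemma monotoneOn_digamma : MonotoneOn digamma (Ioi 0) := by
  intro a ha b hb hab
  rcases hab.eq_or_lt with rfl | hlt
  · rfl
  exact (convexOn_log_Gamma.deriv_le_slope ha hb hlt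
    (hasDerivAt_log_Gamma ha).differentiableAt).trans
    (convexOn_log_Gamma.slope_le_deriv ha hb hlt (hasDerivAt_log_Gamma hb).differentiableAt)

lemma tendsto_digamma_sub_log : Tendsto (fun x => digamma x - log x) atTop (𝓝 0) := by
  refine tendsto_of_tendsto_of_tendsto_of_le_of_le' (tendsto_log_comp_add_sub_log (-1))
    tendsto_const_nhds ?_ ?_
  all_goals filter_upwards [eventually_gt_atTop 1] with y hy
  · have := log_le_digamma_add_one (by linarith : 0 < y + -1)
    rw [neg_add_cancel_right] at this
    linarith
  · linarith [digamma_le_log (by linarith : 0 < y)]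

lemma digamma_sub_log_add_one (hx : 0 < x) :
    digamma (x + 1) - log (x + 1) = digamma x - log x + stepGap x := by
  rw [digamma_add_one hx, stepGap]
  ring

lemma digamma_le_log_sub_corr₃ (hx : 0 < x) : digamma x ≤ log x - corr₃ x := by
  have := nonpos_of_le_add_one_of_tendsto (f := fun y => digamma y - log y + corr₃ y) (x := x)
    (fun y hy => by
      have hy0 : 0 < y := hx.trans_le hy
      linarith [digamma_sub_log_add_one hy0, corr₃_sub_le_stepGap hy0])
    (by simpa using tendsto_digamma_sub_log.add tendsto_corr₃)
  linarith

lemma log_sub_corr₂_le_digamma (hx : 0 < x) : log x - corr₂ x ≤ digamma x := by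
  have := nonpos_of_le_add_one_of_tendsto (f := fun y => log y - corr₂ y - digamma y) (x := x)
    (fun y hy => by
      have hy0 : 0 < y := hx.trans_le hy
      linarith [digamma_sub_log_add_one hy0, stepGap_le_corr₂_sub hy0])
    (by
      have h := (tendsto_digamma_sub_log.add tendsto_corr₂).neg
      rw [add_zero, neg_zero] at h
      exact h.congr fun y => by ring)
  linarith

end Digamma

lemma digamma_four : digamma 4 = 11 / 6 - γ := by
  have h := digamma_add_nat one_pos 3
  rw [digamma_one] at h
  norm_num [Finset.sum_range_succ] at h
  linarith

lemma eulerMascheroniConstant_ge_d4 : (0.5772 : ℝ) ≤ γ := by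
  have h := digamma_le_log_sub_corr₃ (by norm_num : (0 : ℝ) < 4)
  rw [digamma_four, corr₃, corr₂, show (4 : ℝ) = 2 ^ 2 by norm_num, log_pow] at h
  norm_num at h
  linarith [log_two_lt_d9]

lemma eulerMascheroniConstant_le_d5 : γ ≤ (0.57725 : ℝ) := by
  have h := log_sub_corr₂_le_digamma (by norm_num : (0 : ℝ) < 4)
  rw [digamma_four, corr₂, show (4 : ℝ) = 2 ^ 2 by norm_num, log_pow] at h
  norm_num at h
  linarith [log_two_gt_d9]

section NearOne

variable {x : ℝ}

lemma sum_inv_sub_inv_le_digamma_add (hx : 1 ≤ x) (n : ℕ) :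
    ∑ k ∈ Finset.range n, ((1 + k : ℝ)⁻¹ - (x + k)⁻¹) ≤ digamma x + γ := by
  have hmono := monotoneOn_digamma (mem_Ioi.mpr (by positivity : (0 : ℝ) < 1 + n))
    (mem_Ioi.mpr (by positivity : (0 : ℝ) < x + n)) (by linarith)
  rw [digamma_add_nat one_pos, digamma_add_nat (by linarith), digamma_one] at hmono
  rw [Finset.sum_sub_distrib]
  linarith

lemma sub_le_inv_sub_inv_add {a s : ℝ} (ha : 0 < a) (hs : 0 ≤ s) :
    s * (a ^ 2)⁻¹ - s ^ 2 * (a ^ 3)⁻¹ ≤ a⁻¹ - (a + s)⁻¹ := by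
  have hgap : a⁻¹ - (a + s)⁻¹ - (s * (a ^ 2)⁻¹ - s ^ 2 * (a ^ 3)⁻¹) =
      s ^ 3 / (a ^ 3 * (a + s)) := by
    field_simp
    ring
  have : 0 ≤ s ^ 3 / (a ^ 3 * (a + s)) := by positivity
  linarith

lemma digamma_one_add_ge {s : ℝ} (hs : 0 ≤ s) :
    1.6202 * s - 1.2021 * s ^ 2 - γ ≤ digamma (1 + s) := by
  -- partial sums of `ζ 2` and `ζ 3`, rounded down and up respectively
  have hA : (1.6202 : ℝ) ≤ ∑ k ∈ Finset.range 40, ((1 + k : ℝ) ^ 2)⁻¹ := by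
    norm_num [Finset.sum_range_succ]
  have hB : ∑ k ∈ Finset.range 40, ((1 + k : ℝ) ^ 3)⁻¹ ≤ 1.2021 := by
    norm_num [Finset.sum_range_succ]
  calc 1.6202 * s - 1.2021 * s ^ 2 - γ
      ≤ s * ∑ k ∈ Finset.range 40, ((1 + k : ℝ) ^ 2)⁻¹
          - s ^ 2 * ∑ k ∈ Finset.range 40, ((1 + k : ℝ) ^ 3)⁻¹ - γ := by
        nlinarith [mul_le_mul_of_nonneg_left hA hs, mul_le_mul_of_nonneg_left hB (sq_nonneg s)]
    _ = ∑ k ∈ Finset.range 40,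
          (s * ((1 + k : ℝ) ^ 2)⁻¹ - s ^ 2 * ((1 + k : ℝ) ^ 3)⁻¹) - γ := by
        rw [Finset.sum_sub_distrib, Finset.mul_sum, Finset.mul_sum]
    _ ≤ ∑ k ∈ Finset.range 40, ((1 + k : ℝ)⁻¹ - (1 + s + k)⁻¹) - γ := by
        refine sub_le_sub_right (Finset.sum_le_sum fun k _ => ?_) γ
        rw [show 1 + s + k = (1 + k) + s by ring]
        exact sub_le_inv_sub_inv_add (by positivity) hs
    _ ≤ digamma (1 + s) := by
        linarith [sum_inv_sub_inv_le_digamma_add (by linarith : 1 ≤ 1 + s) 40]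

lemma div_one_add_le {s : ℝ} (hs : 0 ≤ s) : s / (1 + s) ≤ s - s ^ 2 + s ^ 3 := by
  rw [div_le_iff₀ (by positivity)]
  nlinarith [pow_nonneg hs 4]

lemma log_sub_div_le_digamma (hx : 1 ≤ x) : log x - γ / x ≤ digamma x := by
  have hγ := eulerMascheroniConstant_ge_d4
  rcases le_or_gt 1.1 x with hfar | hnear
  · have hcorr : corr₂ x ≤ γ / x := by
      rw [← sub_nonneg]
      have : γ / x - corr₂ x = (12 * γ * x - 6 * x - 1) / (12 * x ^ 2) := by
        rw [corr₂]
        field_simp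
        ring
      rw [this]
      exact div_nonneg (by nlinarith) (by positivity)
    linarith [log_sub_corr₂_le_digamma (by linarith : 0 < x)]
  · obtain ⟨s, hs, rfl⟩ : ∃ s, 0 ≤ s ∧ x = 1 + s := ⟨x - 1, by linarith, by ring⟩
    have hsplit : γ / (1 + s) = γ - γ * (s / (1 + s)) := by
      field_simp
      ring
    have hfrac : γ * (s / (1 + s)) ≤ 0.57725 * (s - s ^ 2 + s ^ 3) :=
      mul_le_mul eulerMascheroniConstant_le_d5 (div_one_add_le hs) (by positivity) (by norm_num)
    have hsmall : s ≤ 0.1 := by linarith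
    rw [hsplit]
    nlinarith [digamma_one_add_ge hs, log_one_add_le_cubic hs, mul_nonneg hs hs]

end NearOne

lemma digamma_le_log_sub_half_div {x : ℝ} (hx : 1 ≤ x) : digamma x ≤ log x - 1 / 2 / x := by
  have hx0 : 0 < x := by linarith
  have hquartic : (120 * x ^ 4)⁻¹ ≤ (12 * x ^ 2)⁻¹ :=
    inv_anti₀ (by positivity) (by nlinarith [mul_le_mul hx hx zero_le_one hx0.le])
  have hhalf : 1 / 2 / x = (2 * x)⁻¹ := by field_simp
  have hcorr := digamma_le_log_sub_corr₃ hx0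
  rw [corr₃, corr₂] at hcorr
  linarith

section Comparison

noncomputable def logGammaDefect (a x : ℝ) : ℝ := log (Gamma x) - (x - a) * log x + x - 1

variable {a x : ℝ}

lemma logGammaDefect_one : logGammaDefect a 1 = 0 := by
  simp [logGammaDefect]

lemma hasDerivAt_logGammaDefect (hx : 0 < x) :
    HasDerivAt (logGammaDefect a) (digamma x - log x + a / x) x := by
  refine ((((hasDerivAt_log_Gamma hx).sub (((hasDerivAt_id' x).sub_const a).mul
    (hasDerivAt_log hx.ne'))).add (hasDerivAt_id' x)).sub_const 1).congr_deriv ?_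
  field_simp
  ring

lemma Gamma_eq_mul_exp_logGammaDefect (hx : 0 < x) :
    Gamma x = x ^ (x - a) / exp (x - 1) * exp (logGammaDefect a x) := by
  rw [rpow_def_of_pos hx, div_eq_mul_inv, ← exp_neg, ← exp_add, ← exp_add, logGammaDefect,
    show log x * (x - a) + -(x - 1) + (log (Gamma x) - (x - a) * log x + x - 1) =
      log (Gamma x) by ring, exp_log (Gamma_pos_of_pos hx)]

lemma Gamma_le_rpow_div_exp (h : ∀ y, 1 < y → digamma y ≤ log y - a / y) (hx : 1 ≤ x) :
    Gamma x ≤ x ^ (x - a) / exp (x - 1) := by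
  have hanti : AntitoneOn (logGammaDefect a) (Ici 1) :=
    antitoneOn_Ici_of_hasDerivAt (fun y hy => hasDerivAt_logGammaDefect (by linarith))
      (fun y hy => by linarith [h y hy])
  have hdefect : logGammaDefect a x ≤ 0 := logGammaDefect_one ▸ hanti self_mem_Ici hx hx
  rw [Gamma_eq_mul_exp_logGammaDefect (by linarith)]
  exact mul_le_of_le_one_right (by positivity) (exp_le_one_iff.mpr hdefect)

lemma rpow_div_exp_le_Gamma (h : ∀ y, 1 < y → log y - a / y ≤ digamma y) (hx : 1 ≤ x) :
    x ^ (x - a) / exp (x - 1) ≤ Gamma x := by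
  have hmono : MonotoneOn (logGammaDefect a) (Ici 1) :=
    monotoneOn_Ici_of_hasDerivAt (fun y hy => hasDerivAt_logGammaDefect (by linarith))
      (fun y hy => by linarith [h y hy])
  have hdefect : 0 ≤ logGammaDefect a x := logGammaDefect_one ▸ hmono self_mem_Ici hx hx
  rw [Gamma_eq_mul_exp_logGammaDefect (by linarith)]
  exact le_mul_of_one_le_right (by positivity) (one_le_exp_iff.mpr hdefect)

end Comparison

end GammaBounds

/-- For every real `x ≥ 1`, the Gamma function satisfies
`x^(x-γ)/e^(x-1) ≤ Γ(x) ≤ x^(x-1/2)/e^(x-1)`, where `γ` is the Euler–Mascheroni constant. -/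
theorem gamma_bounds (x : ℝ) (hx : 1 ≤ x) :
    x ^ (x - Real.eulerMascheroniConstant) / Real.exp (x - 1) ≤ Real.Gamma x ∧
      Real.Gamma x ≤ x ^ (x - 1 / 2) / Real.exp (x - 1) :=
  ⟨GammaBounds.rpow_div_exp_le_Gamma (fun _ hy => GammaBounds.log_sub_div_le_digamma hy.le) hx,
    GammaBounds.Gamma_le_rpow_div_exp
      (fun _ hy => GammaBounds.digamma_le_log_sub_half_div hy.le) hx⟩
end

section
/- Let λ be a partition with at most K parts, and set ℓᵢ = λᵢ + (K−i)θ for 1 ≤ i ≤ K, where θ > 0. Then the product over boxes □ of λ of 1/(a(□) + θ·ℓ(□) + 1) equals the product over 1 ≤ i < j ≤ K of Γ(ℓᵢ − ℓⱼ + 1)/Γ(ℓᵢ − ℓⱼ + 1 − θ) times the product over 1 ≤ i ≤ K of 1/Γ(ℓᵢ + 1). -/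
/-! In row `i` the columns split into blocks `f (n + 1) ≤ j < f n`, `i ≤ n < K`, on each of which
the leg is `n - i`; there the factors `a + θ ℓ + 1` run through an arithmetic progression of step 1,
whose product is `Γ(ℓᵢ - ℓₙ₊₁ + 1 - θ) / Γ(ℓᵢ - ℓₙ + 1)`. Multiplying over `n` and shifting the
numerator index gives `Γ(ℓᵢ + 1) ∏_{j > i} Γ(ℓᵢ - ℓⱼ + 1 - θ) / Γ(ℓᵢ - ℓⱼ + 1)`, because
`ℓ_K = -θ` (as `f K = 0`) and `Γ(1) = 1`. -/

open Finset

theorem prod_Ico_sub_eq_Gamma_div {x : ℝ} {a b : ℕ} (hab : a ≤ b) (hbx : (b : ℝ) < x + 1) :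
    ∏ j ∈ Ico a b, (x - j) = Real.Gamma (x - a + 1) / Real.Gamma (x - b + 1) := by
  induction b, hab using Nat.le_induction with
  | base => rw [Ico_self, prod_empty, div_self (Real.Gamma_pos_of_pos (by linarith)).ne']
  | succ b hab ih =>
    push_cast at hbx
    have hxb : 0 < x - b := by linarith
    rw [prod_Ico_succ_top hab, ih (by linarith),
      show x - (b + 1 : ℕ) + 1 = x - b by push_cast; ring, Real.Gamma_add_one hxb.ne']
    field_simp [(Real.Gamma_pos_of_pos hxb).ne']

theorem prod_Ico_eq_prod_prod_Ico_of_antitone {M : Type*} [CommMonoid M] {f : ℕ → ℕ}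
    (hf : Antitone f) (g : ℕ → M) {i m : ℕ} (him : i ≤ m) :
    ∏ j ∈ Ico (f m) (f i), g j = ∏ n ∈ Ico i m, ∏ j ∈ Ico (f (n + 1)) (f n), g j := by
  induction m, him using Nat.le_induction with
  | base => simp
  | succ m him ih =>
    rw [prod_Ico_succ_top him, ← ih, mul_comm, prod_Ico_consecutive _ (hf m.le_succ) (hf him)]

theorem filter_range_lt_of_antitone {f : ℕ → ℕ} (hf : Antitone f) {K n j : ℕ} (hn : n < K)
    (hj : j ∈ Ico (f (n + 1)) (f n)) : {i ∈ range K | j < f i} = range (n + 1) := by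
  rw [mem_Ico] at hj
  ext i
  simp only [mem_filter, mem_range]
  constructor
  · rintro ⟨-, hji⟩
    by_contra! hni
    exact ((hf hni).trans hj.1).not_gt hji
  · intro hin
    exact ⟨by omega, hj.2.trans_le (hf (Nat.lt_succ_iff.mp hin))⟩

theorem prod_Ico_div_succ {α : Type*} [DivisionCommMonoid α] (u v : ℕ → α) {i K : ℕ}
    (hi : i < K) :
    ∏ n ∈ Ico i K, u (n + 1) / v n = u K / v i * ∏ j ∈ Ioo i K, u j / v j := by
  rw [prod_div_distrib, prod_div_distrib, prod_Ico_add' u i K 1, prod_Ico_succ_top hi,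
    prod_eq_prod_Ico_succ_bot hi, Nat.succ_eq_add_one, Ico_add_one_left_eq_Ioo, div_mul_div_comm,
    mul_comm (u K)]

/-- The numbers `ℓ` of the statement, with rows indexed from `0`. -/
def shiftedPart (θ : ℝ) (K : ℕ) (f : ℕ → ℕ) (i : ℕ) : ℝ := f i + ((K : ℝ) - 1 - i) * θ

section
variable {θ : ℝ} {K : ℕ} {f : ℕ → ℕ}

local notation "ℓ" => shiftedPart θ K f

theorem prod_hook_row_eq_prod_Gamma_div (hθ : 0 ≤ θ) (hf : Antitone f) (hK : f K = 0) {i : ℕ}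
    (hi : i ≤ K) :
    ∏ j ∈ range (f i), ((f i : ℝ) - j + θ * ((#{i' ∈ range K | j < f i'} : ℝ) - i - 1))
      = ∏ n ∈ Ico i K, Real.Gamma (ℓ i - ℓ (n + 1) + 1 - θ) / Real.Gamma (ℓ i - ℓ n + 1) := by
  rw [range_eq_Ico, ← hK, prod_Ico_eq_prod_prod_Ico_of_antitone hf _ hi]
  refine prod_congr rfl fun n hn => ?_
  rw [mem_Ico] at hn
  have hleg : ∀ j ∈ Ico (f (n + 1)) (f n),
      (f i : ℝ) - j + θ * ((#{i' ∈ range K | j < f i'} : ℝ) - i - 1) = ℓ i - ℓ n + f n - j := by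
    intro j hj
    rw [filter_range_lt_of_antitone hf hn.2 hj, card_range, shiftedPart, shiftedPart]
    push_cast
    ring
  have hgap : 0 ≤ ℓ i - ℓ n := by
    have : (f n : ℝ) ≤ f i := by exact_mod_cast hf hn.1
    have : (i : ℝ) ≤ n := by exact_mod_cast hn.1
    have : 0 ≤ ((n : ℝ) - i) * θ := mul_nonneg (by linarith) hθ
    simp only [shiftedPart]
    linarith
  rw [prod_congr rfl hleg, prod_Ico_sub_eq_Gamma_div (hf n.le_succ) (by linarith)]
  congr 2 <;> simp only [shiftedPart] <;> push_cast <;> ring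

theorem prod_inv_hook_row_eq (hθ : 0 ≤ θ) (hf : Antitone f) (hK : f K = 0) {i : ℕ} (hi : i < K) :
    ∏ j ∈ range (f i),
        (1 : ℝ) / (((f i : ℝ) - j - 1) + θ * ((#{i' ∈ range K | j < f i'} : ℝ) - i - 1) + 1)
      = (∏ j ∈ Ioo i K, Real.Gamma (ℓ i - ℓ j + 1) / Real.Gamma (ℓ i - ℓ j + 1 - θ))
        * (1 / Real.Gamma (ℓ i + 1)) := by
  have hrow := prod_hook_row_eq_prod_Gamma_div hθ hf hK hi.le
  have hlast : Real.Gamma (ℓ i - ℓ K + 1 - θ) = Real.Gamma (ℓ i + 1) := by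
    simp only [shiftedPart, hK]
    ring_nf
  have hfirst : Real.Gamma (ℓ i - ℓ i + 1) = 1 := by rw [sub_self, zero_add, Real.Gamma_one]
  rw [prod_Ico_div_succ (fun n => Real.Gamma (ℓ i - ℓ n + 1 - θ))
    (fun n => Real.Gamma (ℓ i - ℓ n + 1)) hi, hlast, hfirst, div_one] at hrow
  calc _ = (∏ j ∈ range (f i),
          ((f i : ℝ) - j + θ * ((#{i' ∈ range K | j < f i'} : ℝ) - i - 1)))⁻¹ := by
        rw [← prod_inv_distrib]
        exact prod_congr rfl fun j _ => by rw [one_div]; ring_nf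
    _ = _ := by rw [hrow, mul_inv, ← prod_inv_distrib]; simp only [inv_div, one_div, mul_comm]
end

/-- Let `λ` (here `f`, with 0-indexed parts `f 0 ≥ f 1 ≥ ⋯`) be a partition with at most `K`
parts, and set `ℓᵢ = λᵢ + (K−i)θ` for `1 ≤ i ≤ K` (0-indexed: `ℓ i = f i + (K−1−i)θ`), where
`θ > 0`.  Then
`∏_{□ ∈ λ} 1/(a(□) + θ·ℓ(□) + 1)
  = ∏_{1 ≤ i < j ≤ K} Γ(ℓᵢ − ℓⱼ + 1)/Γ(ℓᵢ − ℓⱼ + 1 − θ) · ∏_{i=1}^{K} 1/Γ(ℓᵢ + 1)`,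
where for the (1-indexed) box `□ = (i,j)` the arm is `a(□) = λᵢ − j` and the leg is
`ℓ(□) = λ'ⱼ − i`, with `λ'` the conjugate partition. -/
theorem armleg_prod_eq_gamma_prod (θ : ℝ) (hθ : 0 < θ) (K : ℕ) (f : ℕ → ℕ)
    (hf : Antitone f) (hK : ∀ i, K ≤ i → f i = 0) :
    (∏ i ∈ Finset.range K, ∏ j ∈ Finset.range (f i),
        (1 : ℝ) / (((f i : ℝ) - j - 1)
          + θ * (((((Finset.range K).filter (fun i' => j < f i')).card : ℝ) - i - 1)) + 1))
      = (∏ i ∈ Finset.range K, ∏ j ∈ Finset.Ioo i K,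
          Real.Gamma (((f i : ℝ) + ((K : ℝ) - 1 - i) * θ)
              - ((f j : ℝ) + ((K : ℝ) - 1 - j) * θ) + 1) /
            Real.Gamma (((f i : ℝ) + ((K : ℝ) - 1 - i) * θ)
              - ((f j : ℝ) + ((K : ℝ) - 1 - j) * θ) + 1 - θ)) *
        ∏ i ∈ Finset.range K, 1 / Real.Gamma ((f i : ℝ) + ((K : ℝ) - 1 - i) * θ + 1) := by
  rw [← prod_mul_distrib]
  exact prod_congr rfl fun i hi =>
    prod_inv_hook_row_eq hθ.le hf (hK K le_rfl) (mem_range.mp hi)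
end

section
/- Fix θ > 0, a, b > 0 with ab ∈ (0,1), m > 0, and d ≥ 1 with dθ > α where α = (ab(m+1) + 2√(abm))/(1−ab). Let P(x) = (1+ab)(x−θ) − ab·d^{−1}(m+1). Then P(x)² − 4ab(d^{−1}+θ−x)(d^{−1}m+θ−x) = (1−ab)²(x−x₁)(x−x₂) where x₁ = θ − (ab(m+1) − 2√(abm))/((1−ab)d) and x₂ = θ − α/d, and for all x ∈ (0, θ − α/d] one has P(x) < 0 and P(x)² − 4ab(d^{−1}+θ−x)(d^{−1}m+θ−x) ≥ 0. -/
/-! With `c = ab`, `s = √(cm)` and `u = θ - x`, the left-hand side is the quadratic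
`(1-c)²u² - 2c(1-c)(m+1)u/d + (c(m+1) - 2s)(c(m+1) + 2s)/d²` in `u`, whose roots are
`(c(m+1) ∓ 2s)/((1-c)d)`. On `(0, θ - α/d]` we have `u ≥ α/d`, the larger root, so the
product is nonnegative, and `P x < 0` already because `x ≤ θ`. -/

theorem discriminant_eq_mul_sub_mul_sub {c m d θ s : ℝ} (hs : s * s = c * m) (hc : c ≠ 1)
    (hd : d ≠ 0) (x : ℝ) :
    ((1 + c) * (x - θ) - c * d⁻¹ * (m + 1)) ^ 2 - 4 * c * (d⁻¹ + θ - x) * (d⁻¹ * m + θ - x)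
      = (1 - c) ^ 2 * (x - (θ - (c * (m + 1) - 2 * s) / ((1 - c) * d)))
          * (x - (θ - (c * (m + 1) + 2 * s) / ((1 - c) * d))) := by
  have hc' : 1 - c ≠ 0 := sub_ne_zero.mpr hc.symm
  field_simp
  linear_combination 4 * hs

theorem linear_neg_of_le {c m d θ x : ℝ} (hc : 0 < c) (hm : -1 < m) (hd : 0 < d)
    (hx : x ≤ θ) : (1 + c) * (x - θ) - c * d⁻¹ * (m + 1) < 0 := by
  have hlin : (1 + c) * (x - θ) ≤ 0 := mul_nonpos_of_nonneg_of_nonpos (by linarith) (by linarith)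
  have hconst : 0 < c * d⁻¹ * (m + 1) := mul_pos (mul_pos hc (inv_pos.mpr hd)) (by linarith)
  linarith

theorem sq_mul_sub_mul_sub_nonneg {k x r₁ r₂ : ℝ} (h₁ : x ≤ r₁) (h₂ : x ≤ r₂) :
    0 ≤ k ^ 2 * (x - r₁) * (x - r₂) :=
  mul_nonneg_of_nonpos_of_nonpos
    (mul_nonpos_of_nonneg_of_nonpos (sq_nonneg k) (sub_nonpos.mpr h₁)) (sub_nonpos.mpr h₂)

theorem caseIV_discriminant_general (θ a b m d : ℝ) (ha : 0 < a) (hb : 0 < b)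
    (hab : a * b < 1) (hm : 0 < m) (hd : 1 ≤ d)
    (α : ℝ) (hα : α = (a * b * (m + 1) + 2 * Real.sqrt (a * b * m)) / (1 - a * b))
    (P : ℝ → ℝ) (hP : ∀ x, P x = (1 + a * b) * (x - θ) - a * b * d⁻¹ * (m + 1))
    (x₁ x₂ : ℝ)
    (hx₁ : x₁ = θ - (a * b * (m + 1) - 2 * Real.sqrt (a * b * m)) / ((1 - a * b) * d))
    (hx₂ : x₂ = θ - α / d) :
    (∀ x : ℝ,
        P x ^ 2 - 4 * (a * b) * (d⁻¹ + θ - x) * (d⁻¹ * m + θ - x)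
          = (1 - a * b) ^ 2 * (x - x₁) * (x - x₂)) ∧
    ∀ x : ℝ, 0 < x → x ≤ θ - α / d →
      P x < 0 ∧ 0 ≤ P x ^ 2 - 4 * (a * b) * (d⁻¹ + θ - x) * (d⁻¹ * m + θ - x) := by
  set s := Real.sqrt (a * b * m)
  have hc : 0 < a * b := mul_pos ha hb
  have hq : 0 < (1 - a * b) * d := mul_pos (by linarith) (by linarith)
  have hs : s * s = a * b * m := Real.mul_self_sqrt (by positivity)
  have hαd : α / d = (a * b * (m + 1) + 2 * s) / ((1 - a * b) * d) := by rw [hα, div_div]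
  have key : ∀ x, P x ^ 2 - 4 * (a * b) * (d⁻¹ + θ - x) * (d⁻¹ * m + θ - x)
      = (1 - a * b) ^ 2 * (x - x₁) * (x - x₂) := fun x => by
    rw [hP, hx₁, hx₂, hαd]
    exact discriminant_eq_mul_sub_mul_sub hs hab.ne (by linarith) x
  have hαd_nonneg : 0 ≤ α / d := hαd ▸ div_nonneg (by positivity) hq.le
  have hx₂₁ : x₂ ≤ x₁ := by
    rw [hx₁, hx₂, hαd]
    gcongr
    linarith [Real.sqrt_nonneg (a * b * m)]
  refine ⟨key, fun x _ hx => ⟨?_, ?_⟩⟩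
  · rw [hP]
    exact linear_neg_of_le hc (by linarith) (by linarith) (by linarith)
  · rw [key]
    exact sq_mul_sub_mul_sub_nonneg (by linarith) (by linarith)

/-- Fix `θ > 0`, `a, b > 0` with `ab ∈ (0,1)`, `m > 0`, and `d ≥ 1` with `dθ > α` where
`α = (ab(m+1) + 2√(abm))/(1−ab)`.  Let `P(x) = (1+ab)(x−θ) − ab·d⁻¹(m+1)`.  Then
`P(x)² − 4ab(d⁻¹+θ−x)(d⁻¹m+θ−x) = (1−ab)²(x−x₁)(x−x₂)` where
`x₁ = θ − (ab(m+1) − 2√(abm))/((1−ab)d)` and `x₂ = θ − α/d`, and for all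
`x ∈ (0, θ − α/d]` one has `P(x) < 0` and `P(x)² − 4ab(d⁻¹+θ−x)(d⁻¹m+θ−x) ≥ 0`. -/
theorem caseIV_discriminant (θ a b m d : ℝ) (hθ : 0 < θ) (ha : 0 < a) (hb : 0 < b)
    (hab : a * b < 1) (hm : 0 < m) (hd : 1 ≤ d)
    (α : ℝ) (hα : α = (a * b * (m + 1) + 2 * Real.sqrt (a * b * m)) / (1 - a * b))
    (hdθ : α < d * θ)
    (P : ℝ → ℝ) (hP : ∀ x, P x = (1 + a * b) * (x - θ) - a * b * d⁻¹ * (m + 1))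
    (x₁ x₂ : ℝ)
    (hx₁ : x₁ = θ - (a * b * (m + 1) - 2 * Real.sqrt (a * b * m)) / ((1 - a * b) * d))
    (hx₂ : x₂ = θ - α / d) :
    (∀ x : ℝ,
        P x ^ 2 - 4 * (a * b) * (d⁻¹ + θ - x) * (d⁻¹ * m + θ - x)
          = (1 - a * b) ^ 2 * (x - x₁) * (x - x₂)) ∧
    ∀ x : ℝ, 0 < x → x ≤ θ - α / d →
      P x < 0 ∧ 0 ≤ P x ^ 2 - 4 * (a * b) * (d⁻¹ + θ - x) * (d⁻¹ * m + θ - x) :=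
  caseIV_discriminant_general θ a b m d ha hb hab hm hd α hα P hP x₁ x₂ hx₁ hx₂
end
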